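/- Let g : ℝ³ → ℝ be defined by g(a,b,c) = max{ (4/3)(1 + 2ab + 2ac + 2bc), (4/3)(1 + 2ab − 2ac − 2bc), (4/3)(1 − 2ab − 2ac + 2bc), (4/3)(1 − 2ab + 2ac − 2bc) }. Then (3/4)·(1/(4π))·∫₀^{2π} ∫₀^{π} g(cos θ sin φ, sin θ sin φ, cos φ) · sin φ dφ dθ = 1 + 4/π. (This is the mean square width of a cube with unit edge length.) -/

import Mathlib

/-!
Over the eight sign patterns of `(a, b, c)` the maximum of the four expressions is
`4/3 (1 + 2|ab| + 2|ac| + 2|bc|)`. In spherical coordinates this separates: the `φ`-integrals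
are `∫ sin = 2`, `∫ sin³ = 4/3` and `∫ sin² |cos| = 2/3`, and the `θ`-integrals of `|cos|`,
`|sin|` and `|cos sin| = |sin 2θ| / 2` all reduce to `∫₀^π sin = 2` by `π`-periodicity of `|sin|`.
-/

open Real

/-- Squared-width function of the cube with vertices `(±√3/3, ±√3/3, ±√3/3)` in direction
`(a,b,c)` on the unit sphere. -/
noncomputable def gCube (a b c : ℝ) : ℝ :=
  max (max ((4/3) * (1 + 2 * a * b + 2 * a * c + 2 * b * c))
        ((4/3) * (1 + 2 * a * b - 2 * a * c - 2 * b * c)))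
    (max ((4/3) * (1 - 2 * a * b - 2 * a * c + 2 * b * c))
      ((4/3) * (1 - 2 * a * b + 2 * a * c - 2 * b * c)))

theorem gCube_eq (a b c : ℝ) :
    gCube a b c = 4 / 3 * (1 + 2 * |a * b| + 2 * |a * c| + 2 * |b * c|) := by
  refine le_antisymm ?_ ?_
  · have := le_abs_self (a * b); have := neg_abs_le (a * b)
    have := le_abs_self (a * c); have := neg_abs_le (a * c)
    have := le_abs_self (b * c); have := neg_abs_le (b * c)
    unfold gCube
    refine max_le (max_le ?_ ?_) (max_le ?_ ?_) <;> linarith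
  · simp only [gCube, le_max_iff]
    rcases le_total 0 a with ha | ha <;> rcases le_total 0 b with hb | hb <;>
      rcases le_total 0 c with hc | hc <;>
      simp only [abs_mul, abs_of_nonneg, abs_of_nonpos, ha, hb, hc] <;>
      grind

theorem sin_nonneg_of_mem_uIcc_zero_pi {x : ℝ} (hx : x ∈ Set.uIcc 0 π) : 0 ≤ sin x := by
  rw [Set.uIcc_of_le pi_pos.le] at hx
  exact sin_nonneg_of_nonneg_of_le_pi hx.1 hx.2

theorem abs_sin_periodic : Function.Periodic (fun x => |sin x|) π := fun x => by
  simp [sin_add_pi]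

theorem integral_abs_sin_zero_pi : ∫ x in (0:ℝ)..π, |sin x| = 2 := by
  rw [intervalIntegral.integral_congr (g := sin) fun x hx =>
    abs_of_nonneg (sin_nonneg_of_mem_uIcc_zero_pi hx), integral_sin]
  norm_num

theorem integral_abs_sin_zero_nat_mul_pi (n : ℕ) : ∫ x in (0:ℝ)..n * π, |sin x| = 2 * n := by
  have := abs_sin_periodic.intervalIntegral_add_zsmul_eq n 0
    fun _ _ => continuous_sin.abs.intervalIntegrable _ _
  simpa [integral_abs_sin_zero_pi, mul_comm] using this

theorem integral_abs_sin_zero_two_pi : ∫ x in (0:ℝ)..2 * π, |sin x| = 4 := by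
  rw [show (2:ℝ) * π = (2:ℕ) * π by norm_num, integral_abs_sin_zero_nat_mul_pi]
  norm_num

theorem integral_abs_cos_zero_two_pi : ∫ x in (0:ℝ)..2 * π, |cos x| = 4 := by
  have hper := (abs_sin_periodic.nsmul 2).intervalIntegral_add_eq (π / 2) 0
  rw [nsmul_eq_mul, Nat.cast_ofNat, zero_add] at hper
  simp_rw [← sin_add_pi_div_two]
  rw [intervalIntegral.integral_comp_add_right (fun x => |sin x|), zero_add, add_comm, hper,
    integral_abs_sin_zero_two_pi]

theorem integral_abs_cos_mul_sin_zero_two_pi : ∫ x in (0:ℝ)..2 * π, |cos x * sin x| = 2 := by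
  have h : ∀ x, |cos x * sin x| = |sin (2 * x)| / 2 := fun x => by
    rw [sin_two_mul, abs_mul, abs_mul]
    norm_num
    ring
  simp_rw [h, intervalIntegral.integral_div,
    intervalIntegral.integral_comp_mul_left (fun x => |sin x|) two_ne_zero]
  rw [show (2:ℝ) * (2 * π) = (4:ℕ) * π by push_cast; ring, mul_zero,
    integral_abs_sin_zero_nat_mul_pi]
  norm_num

theorem integral_sin_sq_mul_abs_cos : ∫ x in (0:ℝ)..π, sin x ^ 2 * |cos x| = 2 / 3 := by
  have hf : Continuous fun x => sin x ^ 2 * |cos x| := by fun_prop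
  have hsymm : ∫ x in π / 2..π, sin x ^ 2 * |cos x| =
      ∫ x in (0:ℝ)..π / 2, sin x ^ 2 * |cos x| := by
    have := intervalIntegral.integral_comp_sub_left (fun x => sin x ^ 2 * |cos x|)
      (a := 0) (b := π / 2) π
    simp only [sin_pi_sub, cos_pi_sub, abs_neg, sub_zero] at this
    rw [this, sub_half]
  have hhalf : ∫ x in (0:ℝ)..π / 2, sin x ^ 2 * |cos x| = 1 / 3 := by
    rw [intervalIntegral.integral_congr (g := fun x => sin x ^ 2 * cos x), integral_sin_sq_mul_cos]
    · simp
    intro x hx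
    rw [Set.uIcc_of_le (by positivity)] at hx
    simp only [abs_of_nonneg (cos_nonneg_of_mem_Icc ⟨by linarith [hx.1, pi_pos], hx.2⟩)]
  rw [← intervalIntegral.integral_add_adjacent_intervals (b := π / 2) (hf.intervalIntegrable _ _)
    (hf.intervalIntegrable _ _), hsymm, hhalf]
  norm_num

theorem gCube_spherical_mul_sin (θ φ : ℝ) (hφ : 0 ≤ sin φ) :
    gCube (cos θ * sin φ) (sin θ * sin φ) (cos φ) * sin φ =
      4 / 3 * sin φ + 8 / 3 * |cos θ * sin θ| * sin φ ^ 3 +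
        8 / 3 * (|cos θ| + |sin θ|) * (sin φ ^ 2 * |cos φ|) := by
  simp only [gCube_eq, abs_mul, abs_of_nonneg hφ]
  ring

theorem integral_gCube_spherical_mul_sin (θ : ℝ) :
    ∫ φ in (0:ℝ)..π, gCube (cos θ * sin φ) (sin θ * sin φ) (cos φ) * sin φ =
      8 / 3 + 32 / 9 * |cos θ * sin θ| + 16 / 9 * (|cos θ| + |sin θ|) := by
  rw [intervalIntegral.integral_congr fun φ hφ =>
      gCube_spherical_mul_sin θ φ (sin_nonneg_of_mem_uIcc_zero_pi hφ),
    intervalIntegral.integral_add, intervalIntegral.integral_add,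
    intervalIntegral.integral_const_mul, intervalIntegral.integral_const_mul,
    intervalIntegral.integral_const_mul, integral_sin, integral_sin_pow_three,
    integral_sin_sq_mul_abs_cos]
  · norm_num
    ring
  all_goals exact (by fun_prop : Continuous _).intervalIntegrable _ _

/-- The mean square width of a cube with unit edge length is `1 + 4/π`. -/
theorem mean_square_width_cube :
    (3/4) * (1 / (4 * π)) *
      ∫ θ in (0:ℝ)..(2 * π), ∫ φ in (0:ℝ)..π,
        gCube (Real.cos θ * Real.sin φ) (Real.sin θ * Real.sin φ) (Real.cos φ) * Real.sin φ
      = 1 + 4 / π := by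
  simp_rw [integral_gCube_spherical_mul_sin]
  rw [intervalIntegral.integral_add, intervalIntegral.integral_add,
    intervalIntegral.integral_const, intervalIntegral.integral_const_mul,
    intervalIntegral.integral_const_mul, intervalIntegral.integral_add,
    integral_abs_cos_mul_sin_zero_two_pi, integral_abs_cos_zero_two_pi,
    integral_abs_sin_zero_two_pi]
  · field_simp
    ring
  all_goals exact (by fun_prop : Continuous _).intervalIntegrable _ _
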